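/- Let t be a real number with 1/2 < t < 1. If the function f belongs to the class Σ'(t), then |a₃ − a₂²| ≤ 4t/3. -/

import Mathlib

/-!
Write `Φ(z) = c₁ z + c₂ z² + ⋯`. Since `f' = Ω(t, Φ)` with
`Ω(t, w) = ∑ Uₙ(t) wⁿ = 1 + 2t w + (4t² - 1) w² + ⋯`, comparing coefficients gives
`2 a₂ = 2t c₁` and `3 a₃ = 2t c₂ + (4t² - 1) c₁²`, hence `3 (a₃ - a₂²) = 2t c₂ + (t² - 1) c₁²`.
Cauchy's estimates for the self-map `Φ` of the unit disc give `|c₁|, |c₂| ≤ 1`, so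
`3 |a₃ - a₂²| ≤ 2t + 1 - t²`, which is at most `4t` because `t² + 2t ≥ 1` for `t > 1/2`.
-/

open Metric Filter Topology

theorem Complex.norm_iteratedDeriv_le_of_forall_mem_ball_norm_le
    {F : Type*} [NormedAddCommGroup F] [NormedSpace ℂ F] [CompleteSpace F]
    {c : ℂ} {R C : ℝ} {f : ℂ → F} (n : ℕ) (hR : 0 < R)
    (hf : DifferentiableOn ℂ f (ball c R)) (hC : ∀ z ∈ ball c R, ‖f z‖ ≤ C) :
    ‖iteratedDeriv n f c‖ ≤ n.factorial * C / R ^ n := by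
  have hlim : Tendsto (fun r : ℝ => n.factorial * C / r ^ n) (𝓝[<] R)
      (𝓝 (n.factorial * C / R ^ n)) :=
    ((continuousAt_const.div (continuousAt_pow R n) (pow_ne_zero n hR.ne')).tendsto).mono_left
      nhdsWithin_le_nhds
  refine ge_of_tendsto hlim ?_
  filter_upwards [Ioo_mem_nhdsLT hR] with r ⟨hr0, hrR⟩
  have hsub : closedBall c r ⊆ ball c R := closedBall_subset_ball hrR
  exact norm_iteratedDeriv_le_of_forall_mem_sphere_norm_le n hr0
    ((hf.mono hsub).diffContOnCl_ball subset_rfl)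
    fun z hz => hC z (hsub (sphere_subset_closedBall hz))

section IteratedDeriv

variable {𝕜 : Type*} [NontriviallyNormedField 𝕜]

theorem iteratedDeriv_two_eq_deriv_deriv {F : Type*} [NormedAddCommGroup F] [NormedSpace 𝕜 F]
    {f : 𝕜 → F} {x : 𝕜} : iteratedDeriv 2 f x = deriv (deriv f) x := by
  rw [iteratedDeriv_succ, iteratedDeriv_one]

theorem deriv_deriv_comp [CompleteSpace 𝕜] {h g : 𝕜 → 𝕜} {x : 𝕜}
    (hh : AnalyticAt 𝕜 h (g x)) (hg : AnalyticAt 𝕜 g x) :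
    deriv (deriv (h ∘ g)) x =
      deriv (deriv h) (g x) * deriv g x ^ 2 + deriv h (g x) * deriv (deriv g) x := by
  have hchain : deriv (h ∘ g) =ᶠ[𝓝 x] fun z => deriv h (g z) * deriv g z := by
    filter_upwards [hg.eventually_analyticAt,
      hg.continuousAt.eventually hh.eventually_analyticAt] with z hgz hhz
    exact deriv_comp z hhz.differentiableAt hgz.differentiableAt
  have hprod : HasDerivAt (fun z => deriv h (g z) * deriv g z)
      (deriv (deriv h) (g x) * deriv g x * deriv g x + deriv h (g x) * deriv (deriv g) x) x :=
    (hh.deriv.differentiableAt.hasDerivAt.comp x hg.differentiableAt.hasDerivAt).mul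
      hg.deriv.differentiableAt.hasDerivAt
  rw [hchain.deriv_eq, hprod.deriv]
  ring

end IteratedDeriv

/-- The paper's `Ω(t, w)`, the generating function `∑ Uₙ(t) wⁿ` of the Chebyshev polynomials of
the second kind. -/
noncomputable def chebyshevGenFun (t w : ℂ) : ℂ := 1 / (1 - 2 * t * w + w ^ 2)

theorem hasDerivAt_chebyshevDenom (t w : ℂ) :
    HasDerivAt (fun w : ℂ => 1 - 2 * t * w + w ^ 2) (2 * w - 2 * t) w :=
  (((hasDerivAt_id' w).const_mul (2 * t)).const_sub 1 |>.add (hasDerivAt_pow 2 w)).congr_deriv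
    (by push_cast; ring)

theorem hasDerivAt_chebyshevGenFun {t w : ℂ} (hw : 1 - 2 * t * w + w ^ 2 ≠ 0) :
    HasDerivAt (chebyshevGenFun t) ((2 * t - 2 * w) / (1 - 2 * t * w + w ^ 2) ^ 2) w := by
  have hinv := (hasDerivAt_chebyshevDenom t w).inv hw
  simp only [← one_div] at hinv
  exact hinv.congr_deriv (by ring)

theorem analyticAt_chebyshevGenFun {t w : ℂ} (hw : 1 - 2 * t * w + w ^ 2 ≠ 0) :
    AnalyticAt ℂ (chebyshevGenFun t) w := by
  unfold chebyshevGenFun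
  fun_prop (disch := exact hw)

theorem deriv_chebyshevGenFun_zero (t : ℂ) : deriv (chebyshevGenFun t) 0 = 2 * t := by
  simp [(hasDerivAt_chebyshevGenFun (t := t) (w := 0) (by simp)).deriv]

theorem deriv_deriv_chebyshevGenFun_zero (t : ℂ) :
    deriv (deriv (chebyshevGenFun t)) 0 = 8 * t ^ 2 - 2 := by
  have hderiv : deriv (chebyshevGenFun t) =ᶠ[𝓝 0]
      fun w => (2 * t - 2 * w) / (1 - 2 * t * w + w ^ 2) ^ 2 := by
    filter_upwards [(hasDerivAt_chebyshevDenom t 0).continuousAt.eventually_ne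
      (by simp : (1 : ℂ) - 2 * t * 0 + 0 ^ 2 ≠ 0)] with w hw
    exact (hasDerivAt_chebyshevGenFun hw).deriv
  have hnum : HasDerivAt (fun w : ℂ => 2 * t - 2 * w) (-2) 0 := by
    simpa using ((hasDerivAt_id (0 : ℂ)).const_mul 2).const_sub (2 * t)
  have hquot : HasDerivAt (fun w => (2 * t - 2 * w) / (1 - 2 * t * w + w ^ 2) ^ 2)
      (8 * t ^ 2 - 2) 0 :=
    (hnum.div ((hasDerivAt_chebyshevDenom t 0).pow 2) (by simp)).congr_deriv (by simp; ring)
  rw [hderiv.deriv_eq, hquot.deriv]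

section ChebyshevSubordination

variable {t : ℂ} {f Φ : ℂ → ℂ}

theorem iteratedDeriv_two_eq_of_deriv_eq_chebyshevGenFun_comp (hΦ0 : Φ 0 = 0)
    (hΦ : AnalyticAt ℂ Φ 0) (hf : deriv f =ᶠ[𝓝 0] chebyshevGenFun t ∘ Φ) :
    iteratedDeriv 2 f 0 = 2 * t * deriv Φ 0 := by
  have hω : AnalyticAt ℂ (chebyshevGenFun t) (Φ 0) := analyticAt_chebyshevGenFun (by simp [hΦ0])
  rw [iteratedDeriv_succ', iteratedDeriv_one, hf.deriv_eq,
    deriv_comp 0 hω.differentiableAt hΦ.differentiableAt, hΦ0, deriv_chebyshevGenFun_zero]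

theorem iteratedDeriv_three_eq_of_deriv_eq_chebyshevGenFun_comp (hΦ0 : Φ 0 = 0)
    (hΦ : AnalyticAt ℂ Φ 0) (hf : deriv f =ᶠ[𝓝 0] chebyshevGenFun t ∘ Φ) :
    iteratedDeriv 3 f 0 = (8 * t ^ 2 - 2) * deriv Φ 0 ^ 2 + 2 * t * iteratedDeriv 2 Φ 0 := by
  have hω : AnalyticAt ℂ (chebyshevGenFun t) (Φ 0) := analyticAt_chebyshevGenFun (by simp [hΦ0])
  rw [iteratedDeriv_succ', hf.iteratedDeriv_eq, iteratedDeriv_two_eq_deriv_deriv,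
    iteratedDeriv_two_eq_deriv_deriv, deriv_deriv_comp hω hΦ, hΦ0,
    deriv_chebyshevGenFun_zero, deriv_deriv_chebyshevGenFun_zero]

end ChebyshevSubordination

theorem norm_mul_add_sq_sub_one_mul_sq_le {t : ℝ} {a b : ℂ} (ht0 : 0 ≤ t) (ht1 : t ≤ 1)
    (ha : ‖a‖ ≤ 2) (hb : ‖b‖ ≤ 1) :
    ‖t * a + (t ^ 2 - 1) * b ^ 2‖ ≤ 2 * t + (1 - t ^ 2) := by
  have hcoef : ‖(t : ℂ) ^ 2 - 1‖ = 1 - t ^ 2 := by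
    rw [← Complex.ofReal_pow, ← Complex.ofReal_one, ← Complex.ofReal_sub, Complex.norm_real,
      Real.norm_of_nonpos (by nlinarith)]
    ring
  calc ‖t * a + (t ^ 2 - 1) * b ^ 2‖
      ≤ t * ‖a‖ + (1 - t ^ 2) * ‖b‖ ^ 2 := by
        refine (norm_add_le _ _).trans_eq ?_
        rw [norm_mul, norm_mul, norm_pow, hcoef, Complex.norm_real, Real.norm_of_nonneg ht0]
    _ ≤ t * 2 + (1 - t ^ 2) * 1 := by
        gcongr
        · nlinarith
        · exact pow_le_one₀ (norm_nonneg b) hb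
    _ = 2 * t + (1 - t ^ 2) := by ring

theorem chebyshev_abs_a3_sub_a2_sq_le_general
    (t : ℝ) (f Φ : ℂ → ℂ)
    (ht : 1 / 2 < t) (ht1 : t < 1)
    (hΦ : AnalyticOnNhd ℂ Φ (ball 0 1)) (hΦ0 : Φ 0 = 0)
    (hΦlt : ∀ z ∈ ball (0 : ℂ) 1, ‖Φ z‖ < 1)
    (hfeq : ∀ z ∈ ball (0 : ℂ) 1,
      deriv f z = 1 / ((1 : ℂ) - 2 * (t : ℂ) * Φ z + (Φ z) ^ 2)) :
    ‖iteratedDeriv 3 f 0 / 6 - (iteratedDeriv 2 f 0 / 2) ^ 2‖ ≤ 4 * t / 3 := by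
  have hsub : deriv f =ᶠ[𝓝 0] chebyshevGenFun t ∘ Φ :=
    eventually_of_mem (isOpen_ball.mem_nhds (mem_ball_self one_pos)) hfeq
  have hΦ_zero : AnalyticAt ℂ Φ 0 := hΦ 0 (mem_ball_self one_pos)
  have hΦle : ∀ z ∈ ball (0 : ℂ) 1, ‖Φ z‖ ≤ 1 := fun z hz => (hΦlt z hz).le
  have hc1 : ‖deriv Φ 0‖ ≤ 1 := by
    simpa using Complex.norm_iteratedDeriv_le_of_forall_mem_ball_norm_le 1 one_pos
      hΦ.differentiableOn hΦle
  have hc2 : ‖iteratedDeriv 2 Φ 0‖ ≤ 2 := by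
    simpa using Complex.norm_iteratedDeriv_le_of_forall_mem_ball_norm_le 2 one_pos
      hΦ.differentiableOn hΦle
  have hfs : iteratedDeriv 3 f 0 / 6 - (iteratedDeriv 2 f 0 / 2) ^ 2 =
      (t * iteratedDeriv 2 Φ 0 + (t ^ 2 - 1) * deriv Φ 0 ^ 2) / 3 := by
    rw [iteratedDeriv_three_eq_of_deriv_eq_chebyshevGenFun_comp hΦ0 hΦ_zero hsub,
      iteratedDeriv_two_eq_of_deriv_eq_chebyshevGenFun_comp hΦ0 hΦ_zero hsub]
    ring
  have hnorm := norm_mul_add_sq_sub_one_mul_sq_le (by linarith) ht1.le hc2 hc1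
  rw [hfs, norm_div, Complex.norm_ofNat]
  nlinarith

/-- **Corollary 2.4, bound (28).** For `1/2 < t < 1`, if `f` belongs to the Chebyshev class `Sigma'(t)`, then `|a₃ - a₂²| ≤ 4t/3`. -/
theorem chebyshev_abs_a3_sub_a2_sq_le
    (t : ℝ) (f g Φ Ψ : ℂ → ℂ)
    (ht : 1 / 2 < t) (ht1 : t < 1)
    (hf : AnalyticOnNhd ℂ f (ball 0 1)) (hfinj : Set.InjOn f (ball 0 1))
    (hf0 : f 0 = 0) (hf1 : deriv f 0 = 1)
    (hg : AnalyticOnNhd ℂ g (ball 0 1)) (hginj : Set.InjOn g (ball 0 1))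
    (hg0 : g 0 = 0)
    (hgf : ∀ᶠ z in nhds (0 : ℂ), g (f z) = z)
    (hfg : ∀ᶠ w in nhds (0 : ℂ), f (g w) = w)
    (hΦ : AnalyticOnNhd ℂ Φ (ball 0 1)) (hΦ0 : Φ 0 = 0)
    (hΦlt : ∀ z ∈ ball (0 : ℂ) 1, ‖Φ z‖ < 1)
    (hΨ : AnalyticOnNhd ℂ Ψ (ball 0 1)) (hΨ0 : Ψ 0 = 0)
    (hΨlt : ∀ w ∈ ball (0 : ℂ) 1, ‖Ψ w‖ < 1)
    (hΦden : ∀ z ∈ ball (0 : ℂ) 1, (1 : ℂ) - 2 * (t : ℂ) * Φ z + (Φ z) ^ 2 ≠ 0)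
    (hΨden : ∀ w ∈ ball (0 : ℂ) 1, (1 : ℂ) - 2 * (t : ℂ) * Ψ w + (Ψ w) ^ 2 ≠ 0)
    (hfeq : ∀ z ∈ ball (0 : ℂ) 1,
      deriv f z = 1 / ((1 : ℂ) - 2 * (t : ℂ) * Φ z + (Φ z) ^ 2))
    (hgeq : ∀ w ∈ ball (0 : ℂ) 1,
      deriv g w = 1 / ((1 : ℂ) - 2 * (t : ℂ) * Ψ w + (Ψ w) ^ 2)) :
    ‖iteratedDeriv 3 f 0 / 6 - (iteratedDeriv 2 f 0 / 2) ^ 2‖ ≤ 4 * t / 3 :=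
  chebyshev_abs_a3_sub_a2_sq_le_general t f Φ ht ht1 hΦ hΦ0 hΦlt hfeq
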